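/- arXiv:2605.07065 — 7 statements merged into one kernel-verified Lean document; each statement's English description precedes it below -/
import Mathlib

section
/- Let (Ω, 𝒜, P) be a probability space, and let X, Y₀, Y₁ : Ω → {0,1} be measurable random variables (binary treatment and potential outcomes), with the observed outcome Y defined by consistency: Y(ω) = Y₁(ω) if X(ω) = 1 and Y(ω) = Y₀(ω) if X(ω) = 0. Define μ₁ = P(Y₁ = 1), μ₀ = P(Y₀ = 1), p_{xy} = P(X = x, Y = y) for x, y ∈ {0,1}, and PNS = P(Y₁ = 1, Y₀ = 0). Then PNS ≥ max{0, μ₁ − μ₀, p₁₁ + p₀₁ − μ₀, μ₁ − p₁₁ − p₀₁}. -/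
open MeasureTheory

/-- Tian–Pearl sharp lower bound on the Probability of Necessity and Sufficiency. -/
theorem pns_lower_bound {Ω : Type*} [MeasurableSpace Ω] (P : Measure Ω)
    [IsProbabilityMeasure P] (X Y₀ Y₁ Y : Ω → Bool)
    (hX : Measurable X) (hY₀ : Measurable Y₀) (hY₁ : Measurable Y₁)
    (hY : ∀ ω, Y ω = if X ω = true then Y₁ ω else Y₀ ω) :
    let μ₁ := (P {ω | Y₁ ω = true}).toReal
    let μ₀ := (P {ω | Y₀ ω = true}).toReal
    let p₁₁ := (P {ω | X ω = true ∧ Y ω = true}).toReal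
    let p₀₁ := (P {ω | X ω = false ∧ Y ω = true}).toReal
    let PNS := (P {ω | Y₁ ω = true ∧ Y₀ ω = false}).toReal
    max 0 (max (μ₁ - μ₀) (max (p₁₁ + p₀₁ - μ₀) (μ₁ - p₁₁ - p₀₁))) ≤ PNS := by
  intro μ₁ μ₀ p₁₁ p₀₁ PNS
  have hA : {ω | X ω = true ∧ Y ω = true} = {ω | X ω = true ∧ Y₁ ω = true} := by
    ext ω; simp only [Set.mem_setOf_eq, hY ω]
    constructor <;> rintro ⟨h1, h2⟩ <;> simp [h1] at h2 ⊢ <;> exact h2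
  have hB : {ω | X ω = false ∧ Y ω = true} = {ω | X ω = false ∧ Y₀ ω = true} := by
    ext ω; simp only [Set.mem_setOf_eq, hY ω]
    constructor <;> rintro ⟨h1, h2⟩ <;> simp [h1] at h2 ⊢ <;> exact h2
  set A := {ω | X ω = true ∧ Y₁ ω = true} with hAdef
  set B := {ω | X ω = false ∧ Y₀ ω = true} with hBdef
  set N := {ω | Y₁ ω = true ∧ Y₀ ω = false} with hNdef
  have hne : ∀ s : Set Ω, P s ≠ ⊤ := fun s => measure_ne_top P s
  -- P A + P B = P (A ∪ B)
  have hdisj : Disjoint A B := by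
    rw [Set.disjoint_left]; rintro ω ⟨h1, _⟩ ⟨h2, _⟩; simp [h1] at h2
  have hmB : MeasurableSet B :=
    ((hX (measurableSet_singleton false)).inter (hY₀ (measurableSet_singleton true)))
  have hAB : P (A ∪ B) = P A + P B := measure_union hdisj hmB
  -- inequality 2 : P {Y₁=1} ≤ P N + P {Y₀=1}
  have h2 : P {ω | Y₁ ω = true} ≤ P N + P {ω | Y₀ ω = true} := by
    refine le_trans (measure_mono ?_) (measure_union_le _ _)
    intro ω h1
    rcases Bool.eq_false_or_eq_true (Y₀ ω) with h0 | h0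
    · exact Or.inr h0
    · exact Or.inl ⟨h1, h0⟩
  -- inequality 3 : P A + P B ≤ P N + P {Y₀=1}
  have h3 : P A + P B ≤ P N + P {ω | Y₀ ω = true} := by
    rw [← hAB]
    refine le_trans (measure_mono ?_) (measure_union_le _ _)
    rintro ω (⟨hx, h1⟩ | ⟨hx, h0⟩)
    · rcases Bool.eq_false_or_eq_true (Y₀ ω) with h0 | h0
      · exact Or.inr h0
      · exact Or.inl ⟨h1, h0⟩
    · exact Or.inr h0
  -- inequality 4 : P {Y₁=1} ≤ P N + (P A + P B)
  have h4 : P {ω | Y₁ ω = true} ≤ P N + (P A + P B) := by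
    rw [← hAB]
    refine le_trans (measure_mono ?_) (measure_union_le _ _)
    intro ω h1
    rcases Bool.eq_false_or_eq_true (Y₀ ω) with h0 | h0
    · rcases Bool.eq_false_or_eq_true (X ω) with hx | hx
      · exact Or.inr (Or.inl ⟨hx, h1⟩)
      · exact Or.inr (Or.inr ⟨hx, h0⟩)
    · exact Or.inl ⟨h1, h0⟩
  -- convert to reals
  have hp₁₁ : p₁₁ = (P A).toReal := by rw [show p₁₁ = (P {ω | X ω = true ∧ Y ω = true}).toReal from rfl, hA]
  have hp₀₁ : p₀₁ = (P B).toReal := by rw [show p₀₁ = (P {ω | X ω = false ∧ Y ω = true}).toReal from rfl, hB]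
  have r2 : μ₁ ≤ PNS + μ₀ := by
    have := ENNReal.toReal_mono (by finiteness) h2
    rwa [ENNReal.toReal_add (by finiteness) (by finiteness)] at this
  have r3 : p₁₁ + p₀₁ ≤ PNS + μ₀ := by
    have := ENNReal.toReal_mono (by finiteness) h3
    rw [ENNReal.toReal_add (by finiteness) (by finiteness), ENNReal.toReal_add (by finiteness) (by finiteness)] at this
    rw [hp₁₁, hp₀₁]; exact this
  have r4 : μ₁ ≤ PNS + (p₁₁ + p₀₁) := by
    have := ENNReal.toReal_mono (by finiteness) h4
    rw [ENNReal.toReal_add (by finiteness) (by finiteness), ENNReal.toReal_add (by finiteness) (by finiteness)] at this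
    rw [hp₁₁, hp₀₁]; exact this
  have h0 : (0:ℝ) ≤ PNS := ENNReal.toReal_nonneg
  simp only [max_le_iff]
  exact ⟨h0, by linarith, by linarith, by linarith⟩
end

section
/- Let (Ω, 𝒜, P) be a probability space, and let X, Y₀, Y₁ : Ω → {0,1} be measurable random variables (binary treatment and potential outcomes), with the observed outcome Y defined by consistency: Y(ω) = Y₁(ω) if X(ω) = 1 and Y(ω) = Y₀(ω) if X(ω) = 0. Define μ₁ = P(Y₁ = 1), μ₀ = P(Y₀ = 1), p_{xy} = P(X = x, Y = y) for x, y ∈ {0,1}, and PNS = P(Y₁ = 1, Y₀ = 0). Then PNS ≤ min{μ₁, 1 − μ₀, p₁₁ + p₀₀, μ₁ − μ₀ + p₁₀ + p₀₁}. -/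
open MeasureTheory

/-- Tian–Pearl sharp upper bound on the Probability of Necessity and Sufficiency. -/
theorem pns_upper_bound {Ω : Type*} [MeasurableSpace Ω] (P : Measure Ω)
    [IsProbabilityMeasure P] (X Y₀ Y₁ Y : Ω → Bool)
    (hX : Measurable X) (hY₀ : Measurable Y₀) (hY₁ : Measurable Y₁)
    (hY : ∀ ω, Y ω = if X ω = true then Y₁ ω else Y₀ ω) :
    let μ₁ := (P {ω | Y₁ ω = true}).toReal
    let μ₀ := (P {ω | Y₀ ω = true}).toReal
    let p₁₁ := (P {ω | X ω = true ∧ Y ω = true}).toReal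
    let p₁₀ := (P {ω | X ω = true ∧ Y ω = false}).toReal
    let p₀₁ := (P {ω | X ω = false ∧ Y ω = true}).toReal
    let p₀₀ := (P {ω | X ω = false ∧ Y ω = false}).toReal
    let PNS := (P {ω | Y₁ ω = true ∧ Y₀ ω = false}).toReal
    PNS ≤ min μ₁ (min (1 - μ₀) (min (p₁₁ + p₀₀) (μ₁ - μ₀ + p₁₀ + p₀₁))) := by
  intro μ₁ μ₀ p₁₁ p₁₀ p₀₁ p₀₀ PNS
  -- measurable sets
  have mS : MeasurableSet {ω | Y₁ ω = true ∧ Y₀ ω = false} :=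
    (hY₁ (measurableSet_singleton true)).inter (hY₀ (measurableSet_singleton false))
  have mT : MeasurableSet {ω | Y₁ ω = true ∧ Y₀ ω = true} :=
    (hY₁ (measurableSet_singleton true)).inter (hY₀ (measurableSet_singleton true))
  have mU : MeasurableSet {ω | Y₁ ω = false ∧ Y₀ ω = true} :=
    (hY₁ (measurableSet_singleton false)).inter (hY₀ (measurableSet_singleton true))
  set a : ℝ := (P {ω | Y₁ ω = true ∧ Y₀ ω = true}).toReal with ha
  set b : ℝ := (P {ω | Y₁ ω = false ∧ Y₀ ω = true}).toReal with hb
  -- decomposition μ₁ = PNS + a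
  have h1 : μ₁ = PNS + a := by
    have hset : {ω | Y₁ ω = true} =
        {ω | Y₁ ω = true ∧ Y₀ ω = false} ∪ {ω | Y₁ ω = true ∧ Y₀ ω = true} := by
      ext ω; simp only [Set.mem_setOf_eq, Set.mem_union]
      cases h : Y₀ ω <;> tauto
    have hdisj : Disjoint {ω | Y₁ ω = true ∧ Y₀ ω = false}
        {ω | Y₁ ω = true ∧ Y₀ ω = true} := by
      rw [Set.disjoint_left]; rintro ω ⟨_, h0⟩ ⟨_, h1⟩; simp [h0] at h1
    have := measure_union (μ := P) hdisj mT
    simp only [μ₁, PNS, ha, hset, this]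
    rw [ENNReal.toReal_add (measure_ne_top P _) (measure_ne_top P _)]
  -- decomposition μ₀ = a + b
  have h0 : μ₀ = a + b := by
    have hset : {ω | Y₀ ω = true} =
        {ω | Y₁ ω = true ∧ Y₀ ω = true} ∪ {ω | Y₁ ω = false ∧ Y₀ ω = true} := by
      ext ω; simp only [Set.mem_setOf_eq, Set.mem_union]
      cases h : Y₁ ω <;> tauto
    have hdisj : Disjoint {ω | Y₁ ω = true ∧ Y₀ ω = true}
        {ω | Y₁ ω = false ∧ Y₀ ω = true} := by
      rw [Set.disjoint_left]; rintro ω ⟨h1, _⟩ ⟨h1', _⟩; simp [h1] at h1'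
    have := measure_union (μ := P) hdisj mU
    simp only [μ₀, ha, hb, hset, this]
    rw [ENNReal.toReal_add (measure_ne_top P _) (measure_ne_top P _)]
  -- PNS ≤ μ₁
  have hb1 : PNS ≤ μ₁ := by
    apply ENNReal.toReal_mono (measure_ne_top P _)
    exact measure_mono fun ω h => h.1
  -- a ≥ 0, b ≥ 0 etc.
  have hanneg : 0 ≤ a := ENNReal.toReal_nonneg
  have hbnneg : 0 ≤ b := ENNReal.toReal_nonneg
  -- μ₀ + P{Y₀ = false} = 1
  have hb2 : PNS ≤ 1 - μ₀ := by
    have hc : {ω | Y₀ ω = false} = {ω | Y₀ ω = true}ᶜ := by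
      ext ω; simp only [Set.mem_setOf_eq, Set.mem_compl_iff, Bool.not_eq_true]
    have hcompl : (P {ω | Y₀ ω = false}).toReal = 1 - μ₀ := by
      rw [hc, measure_compl (show MeasurableSet {ω | Y₀ ω = true} from hY₀ (measurableSet_singleton true)) (measure_ne_top P _)]
      simp only [measure_univ]
      rw [ENNReal.toReal_sub_of_le prob_le_one (by simp)]
      simp [μ₀]
    rw [← hcompl]
    apply ENNReal.toReal_mono (measure_ne_top P _)
    exact measure_mono fun ω h => h.2
  -- PNS ≤ p₁₁ + p₀₀
  have hb3 : PNS ≤ p₁₁ + p₀₀ := by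
    have hsub : {ω | Y₁ ω = true ∧ Y₀ ω = false} ⊆
        {ω | X ω = true ∧ Y ω = true} ∪ {ω | X ω = false ∧ Y ω = false} := by
      rintro ω ⟨h1, h0⟩
      cases hx : X ω
      · right; exact ⟨hx, by rw [hY ω, hx]; simpa using h0⟩
      · left; exact ⟨hx, by rw [hY ω, hx]; simpa using h1⟩
    calc PNS ≤ (P ({ω | X ω = true ∧ Y ω = true} ∪ {ω | X ω = false ∧ Y ω = false})).toReal :=
          ENNReal.toReal_mono (measure_ne_top P _) (measure_mono hsub)
      _ ≤ (P {ω | X ω = true ∧ Y ω = true} + P {ω | X ω = false ∧ Y ω = false}).toReal :=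
          ENNReal.toReal_mono (by simp [measure_ne_top]) (measure_union_le _ _)
      _ = p₁₁ + p₀₀ := ENNReal.toReal_add (measure_ne_top P _) (measure_ne_top P _)
  -- b ≤ p₁₀ + p₀₁
  have hble : b ≤ p₁₀ + p₀₁ := by
    have hsub : {ω | Y₁ ω = false ∧ Y₀ ω = true} ⊆
        {ω | X ω = true ∧ Y ω = false} ∪ {ω | X ω = false ∧ Y ω = true} := by
      rintro ω ⟨h1, h0⟩
      cases hx : X ω
      · right; exact ⟨hx, by rw [hY ω, hx]; simpa using h0⟩
      · left; exact ⟨hx, by rw [hY ω, hx]; simpa using h1⟩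
    calc b ≤ (P ({ω | X ω = true ∧ Y ω = false} ∪ {ω | X ω = false ∧ Y ω = true})).toReal :=
          ENNReal.toReal_mono (measure_ne_top P _) (measure_mono hsub)
      _ ≤ (P {ω | X ω = true ∧ Y ω = false} + P {ω | X ω = false ∧ Y ω = true}).toReal :=
          ENNReal.toReal_mono (by simp [measure_ne_top]) (measure_union_le _ _)
      _ = p₁₀ + p₀₁ := ENNReal.toReal_add (measure_ne_top P _) (measure_ne_top P _)
  refine le_min hb1 (le_min hb2 (le_min hb3 ?_))
  linarith
end

section
/- Let (Ω, 𝒜, P) be a probability space, X, Y₀, Y₁ : Ω → {0,1} measurable, and Y = Y_X the observed outcome (Y(ω) = Y₁(ω) if X(ω)=1, else Y₀(ω)). With μ₀ = P(Y₀ = 1), p₁₁ = P(X=1, Y=1), p₀₁ = P(X=0, Y=1), and PNS = P(Y₁ = 1, Y₀ = 0), one has PNS ≥ p₁₁ + p₀₁ − μ₀. -/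
open MeasureTheory

/-- Third term of the Tian–Pearl lower bound: PNS ≥ p₁₁ + p₀₁ − μ₀. -/
theorem pns_ge_obs_minus_mu0 {Ω : Type*} [MeasurableSpace Ω] (P : Measure Ω)
    [IsProbabilityMeasure P] (X Y₀ Y₁ Y : Ω → Bool)
    (hX : Measurable X) (hY₀ : Measurable Y₀) (hY₁ : Measurable Y₁)
    (hY : ∀ ω, Y ω = if X ω = true then Y₁ ω else Y₀ ω) :
    let μ₀ := (P {ω | Y₀ ω = true}).toReal
    let p₁₁ := (P {ω | X ω = true ∧ Y ω = true}).toReal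
    let p₀₁ := (P {ω | X ω = false ∧ Y ω = true}).toReal
    let PNS := (P {ω | Y₁ ω = true ∧ Y₀ ω = false}).toReal
    p₁₁ + p₀₁ - μ₀ ≤ PNS := by
  intro μ₀ p₁₁ p₀₁ PNS
  have key : P {ω | X ω = true ∧ Y ω = true} + P {ω | X ω = false ∧ Y ω = true}
      ≤ P {ω | Y₁ ω = true ∧ Y₀ ω = false} + P {ω | Y₀ ω = true} := by
    have h1 : P {ω | X ω = true ∧ Y ω = true} + P {ω | X ω = false ∧ Y ω = true}
        = P ({ω | X ω = true ∧ Y ω = true} ∪ {ω | X ω = false ∧ Y ω = true}) := by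
      rw [measure_union]
      · intro s hs1 hs2 ω hω
        have h1 := hs1 hω; have h2 := hs2 hω
        simp only [Set.mem_setOf_eq] at h1 h2
        simp [h1.1] at h2
      · have hYm : Measurable Y := by
          have : Y = fun ω => if X ω = true then Y₁ ω else Y₀ ω := funext hY
          rw [this]
          exact Measurable.ite (hX (MeasurableSet.singleton true)) hY₁ hY₀
        have : {ω | X ω = false ∧ Y ω = true} = X ⁻¹' {false} ∩ Y ⁻¹' {true} := by
          ext ω; simp [Set.mem_setOf_eq]
        rw [this]
        exact (hX (MeasurableSet.singleton false)).inter (hYm (MeasurableSet.singleton true))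
    rw [h1]
    refine le_trans (measure_mono ?_) (measure_union_le _ _)
    intro ω hω
    simp only [Set.mem_union, Set.mem_setOf_eq] at hω ⊢
    have hYω := hY ω
    rcases hω with ⟨hx, hy⟩ | ⟨hx, hy⟩
    · rw [hx, if_pos rfl] at hYω
      cases h0 : Y₀ ω
      · exact Or.inl ⟨by rw [← hYω]; exact hy, rfl⟩
      · exact Or.inr rfl

    · rw [hx] at hYω; simp at hYω
      exact Or.inr (hYω ▸ hy)
  have hfin : ∀ s : Set Ω, P s ≠ ⊤ := fun s => measure_ne_top P s
  have := ENNReal.toReal_mono (by simp [ENNReal.add_ne_top, hfin]) key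
  rw [ENNReal.toReal_add (hfin _) (hfin _), ENNReal.toReal_add (hfin _) (hfin _)] at this
  simp only [μ₀, p₁₁, p₀₁, PNS]
  linarith
end

section
/- Let (Ω, 𝒜, P) be a probability space, X, Y₀, Y₁ : Ω → {0,1} measurable, and Y = Y_X the observed outcome (Y(ω) = Y₁(ω) if X(ω)=1, else Y₀(ω)). With μ₁ = P(Y₁ = 1), p₁₁ = P(X=1, Y=1), p₀₁ = P(X=0, Y=1), and PNS = P(Y₁ = 1, Y₀ = 0), one has PNS ≥ μ₁ − p₁₁ − p₀₁. -/
open MeasureTheory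

/-- Fourth term of the Tian–Pearl lower bound: PNS ≥ μ₁ − p₁₁ − p₀₁. -/
theorem pns_ge_mu1_minus_obs {Ω : Type*} [MeasurableSpace Ω] (P : Measure Ω)
    [IsProbabilityMeasure P] (X Y₀ Y₁ Y : Ω → Bool)
    (hX : Measurable X) (hY₀ : Measurable Y₀) (hY₁ : Measurable Y₁)
    (hY : ∀ ω, Y ω = if X ω = true then Y₁ ω else Y₀ ω) :
    let μ₁ := (P {ω | Y₁ ω = true}).toReal
    let p₁₁ := (P {ω | X ω = true ∧ Y ω = true}).toReal
    let p₀₁ := (P {ω | X ω = false ∧ Y ω = true}).toReal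
    let PNS := (P {ω | Y₁ ω = true ∧ Y₀ ω = false}).toReal
    μ₁ - p₁₁ - p₀₁ ≤ PNS := by
  intro μ₁ p₁₁ p₀₁ PNS
  have hsub : {ω | Y₁ ω = true} ⊆
      {ω | Y₁ ω = true ∧ Y₀ ω = false} ∪
      ({ω | X ω = true ∧ Y ω = true} ∪ {ω | X ω = false ∧ Y ω = true}) := by
    intro ω h1
    simp only [Set.mem_setOf_eq] at h1
    by_cases h0 : Y₀ ω = false
    · exact Or.inl ⟨h1, h0⟩
    · right
      have h0' : Y₀ ω = true := by
        cases hh : Y₀ ω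
        · exact absurd hh h0
        · rfl
      cases hx : X ω
      · exact Or.inr ⟨hx, by rw [hY ω, hx]; simpa using h0'⟩
      · exact Or.inl ⟨hx, by rw [hY ω, hx]; simpa using h1⟩
  have hle : P {ω | Y₁ ω = true} ≤
      P {ω | Y₁ ω = true ∧ Y₀ ω = false} +
      (P {ω | X ω = true ∧ Y ω = true} + P {ω | X ω = false ∧ Y ω = true}) :=
    le_trans (measure_mono hsub)
      (le_trans (measure_union_le _ _)
        (add_le_add le_rfl (measure_union_le _ _)))
  have h1 := measure_ne_top P {ω | Y₁ ω = true ∧ Y₀ ω = false}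
  have h2 := measure_ne_top P {ω | X ω = true ∧ Y ω = true}
  have h3 := measure_ne_top P {ω | X ω = false ∧ Y ω = true}
  have := ENNReal.toReal_le_toReal (measure_ne_top P _)
    (by finiteness : P {ω | Y₁ ω = true ∧ Y₀ ω = false} +
      (P {ω | X ω = true ∧ Y ω = true} + P {ω | X ω = false ∧ Y ω = true}) ≠ ⊤)
    |>.mpr hle
  rw [ENNReal.toReal_add h1 (by finiteness), ENNReal.toReal_add h2 h3] at this
  simp only [μ₁, p₁₁, p₀₁, PNS]
  linarith
end

section
/- Let (Ω, 𝒜, P) be a probability space, X, Y₀, Y₁ : Ω → {0,1} measurable, and Y = Y_X the observed outcome (Y(ω) = Y₁(ω) if X(ω)=1, else Y₀(ω)). With p₁₁ = P(X=1, Y=1), p₀₀ = P(X=0, Y=0), and PNS = P(Y₁ = 1, Y₀ = 0), one has PNS ≤ p₁₁ + p₀₀. -/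
open MeasureTheory

/-- Third term of the Tian–Pearl upper bound: PNS ≤ p₁₁ + p₀₀. -/
theorem pns_le_p11_add_p00 {Ω : Type*} [MeasurableSpace Ω] (P : Measure Ω)
    [IsProbabilityMeasure P] (X Y₀ Y₁ Y : Ω → Bool)
    (hX : Measurable X) (hY₀ : Measurable Y₀) (hY₁ : Measurable Y₁)
    (hY : ∀ ω, Y ω = if X ω = true then Y₁ ω else Y₀ ω) :
    let p₁₁ := (P {ω | X ω = true ∧ Y ω = true}).toReal
    let p₀₀ := (P {ω | X ω = false ∧ Y ω = false}).toReal
    let PNS := (P {ω | Y₁ ω = true ∧ Y₀ ω = false}).toReal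
    PNS ≤ p₁₁ + p₀₀ := by
  intro p₁₁ p₀₀ PNS
  have hsub : {ω | Y₁ ω = true ∧ Y₀ ω = false} ⊆
      {ω | X ω = true ∧ Y ω = true} ∪ {ω | X ω = false ∧ Y ω = false} := by
    intro ω ⟨h1, h0⟩
    rcases Bool.eq_false_or_eq_true (X ω) with hx | hx
    · left; refine ⟨hx, ?_⟩; rw [hY ω, hx]; simp [h1]
    · right; refine ⟨hx, ?_⟩; rw [hY ω, hx]; simp [h0]
  have hle : P {ω | Y₁ ω = true ∧ Y₀ ω = false} ≤ P {ω | X ω = true ∧ Y ω = true} + P {ω | X ω = false ∧ Y ω = false} := (measure_mono hsub).trans (measure_union_le _ _)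
  have h1 : P {ω | X ω = true ∧ Y ω = true} ≠ ⊤ := measure_ne_top _ _
  have h2 : P {ω | X ω = false ∧ Y ω = false} ≠ ⊤ := measure_ne_top _ _
  calc PNS ≤ (P {ω | X ω = true ∧ Y ω = true} + P {ω | X ω = false ∧ Y ω = false}).toReal :=
        ENNReal.toReal_mono (by simp [ENNReal.add_ne_top, h1, h2]) hle
    _ = p₁₁ + p₀₀ := ENNReal.toReal_add h1 h2
end

section
/- Let (Ω, 𝒜, P) be a probability space, X, Y₀, Y₁ : Ω → {0,1} measurable, and Y = Y_X the observed outcome (Y(ω) = Y₁(ω) if X(ω)=1, else Y₀(ω)). With μ₁ = P(Y₁=1), μ₀ = P(Y₀=1), p₁₀ = P(X=1, Y=0), p₀₁ = P(X=0, Y=1), and PNS = P(Y₁ = 1, Y₀ = 0), one has PNS ≤ μ₁ − μ₀ + p₁₀ + p₀₁. -/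
/-!
Write `A = {Y₁ = 1}` and `B = {Y₀ = 1}`, so that `PNS = P(A \ B)`. Since
`P(A \ B) + P(B) = P(A ∪ B) ≤ P(A) + P(B \ A)`, we get `PNS ≤ μ₁ - μ₀ + P(Y₀ = 1, Y₁ = 0)`,
and on the event `{Y₀ = 1, Y₁ = 0}` the observed pair `(X, Y)` is `(1, 0)` or `(0, 1)`.
-/

open MeasureTheory Set

theorem measureReal_diff_le_sub_add_diff {α : Type*} [MeasurableSpace α] (μ : Measure α)
    [IsFiniteMeasure μ] (s : Set α) {t : Set α} (ht : MeasurableSet t) :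
    μ.real (s \ t) ≤ μ.real s - μ.real t + μ.real (t \ s) := by
  have h_union : μ.real (s ∪ t) = μ.real (s \ t) + μ.real t := by
    rw [← measureReal_union disjoint_sdiff_left ht, sdiff_union_self]
  have h_le : μ.real (s ∪ t) ≤ μ.real s + μ.real (t \ s) := by
    rw [← union_sdiff_self]
    exact measureReal_union_le s (t \ s)
  linarith

theorem diff_subset_discordant {Ω : Type*} (X Y₀ Y₁ Y : Ω → Bool)
    (hY : ∀ ω, Y ω = if X ω = true then Y₁ ω else Y₀ ω) :
    {ω | Y₀ ω = true} \ {ω | Y₁ ω = true} ⊆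
      {ω | X ω = true ∧ Y ω = false} ∪ {ω | X ω = false ∧ Y ω = true} := by
  intro ω ⟨h₀, h₁⟩
  simp only [mem_ofPred_eq, Bool.not_eq_true] at h₀ h₁
  cases hx : X ω <;> simp [hY ω, hx, h₀, h₁]

theorem pns_le_ate_add_discordant_general {Ω : Type*} [MeasurableSpace Ω] (P : Measure Ω)
    [IsProbabilityMeasure P] (X Y₀ Y₁ Y : Ω → Bool)
    (hY₀ : Measurable Y₀)
    (hY : ∀ ω, Y ω = if X ω = true then Y₁ ω else Y₀ ω) :
    let μ₁ := (P {ω | Y₁ ω = true}).toReal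
    let μ₀ := (P {ω | Y₀ ω = true}).toReal
    let p₁₀ := (P {ω | X ω = true ∧ Y ω = false}).toReal
    let p₀₁ := (P {ω | X ω = false ∧ Y ω = true}).toReal
    let PNS := (P {ω | Y₁ ω = true ∧ Y₀ ω = false}).toReal
    PNS ≤ μ₁ - μ₀ + p₁₀ + p₀₁ := by
  intro μ₁ μ₀ p₁₀ p₀₁ PNS
  have h_pns : {ω | Y₁ ω = true ∧ Y₀ ω = false} = {ω | Y₁ ω = true} \ {ω | Y₀ ω = true} := by
    ext ω
    simp
  have h_discordant : P.real ({ω | Y₀ ω = true} \ {ω | Y₁ ω = true}) ≤ p₁₀ + p₀₁ :=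
    (measureReal_mono (diff_subset_discordant X Y₀ Y₁ Y hY)).trans (measureReal_union_le _ _)
  calc PNS = P.real ({ω | Y₁ ω = true} \ {ω | Y₀ ω = true}) := by
        rw [← h_pns, measureReal_def]
    _ ≤ μ₁ - μ₀ + P.real ({ω | Y₀ ω = true} \ {ω | Y₁ ω = true}) :=
        measureReal_diff_le_sub_add_diff P _ (hY₀ (measurableSet_singleton true))
    _ ≤ μ₁ - μ₀ + p₁₀ + p₀₁ := by linarith

/-- Fourth term of the Tian–Pearl upper bound: PNS ≤ μ₁ − μ₀ + p₁₀ + p₀₁. -/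
theorem pns_le_ate_add_discordant {Ω : Type*} [MeasurableSpace Ω] (P : Measure Ω)
    [IsProbabilityMeasure P] (X Y₀ Y₁ Y : Ω → Bool)
    (hX : Measurable X) (hY₀ : Measurable Y₀) (hY₁ : Measurable Y₁)
    (hY : ∀ ω, Y ω = if X ω = true then Y₁ ω else Y₀ ω) :
    let μ₁ := (P {ω | Y₁ ω = true}).toReal
    let μ₀ := (P {ω | Y₀ ω = true}).toReal
    let p₁₀ := (P {ω | X ω = true ∧ Y ω = false}).toReal
    let p₀₁ := (P {ω | X ω = false ∧ Y ω = true}).toReal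
    let PNS := (P {ω | Y₁ ω = true ∧ Y₀ ω = false}).toReal
    PNS ≤ μ₁ - μ₀ + p₁₀ + p₀₁ :=
  pns_le_ate_add_discordant_general P X Y₀ Y₁ Y hY₀ hY
end

section
/- Let (Ω, 𝒜, P) be a probability space, E a measurable space, and (W_i)_{i≥1} an i.i.d. sequence of E-valued random variables with common distribution ν. Let φ : E → ℝ be measurable with ∫ φ² dν < ∞, and for each n let φ̂_n : E → ℝ be measurable estimates such that D_n := (1/n)·Σ_{i=1}^n (φ̂_n(W_i) − φ(W_i))² converges to 0 in probability as n → ∞. Then the plug-in second moment (1/n)·Σ_{i=1}^n φ̂_n(W_i)² converges in probability to ∫ φ² dν as n → ∞. -/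
open MeasureTheory Filter

set_option maxHeartbeats 1000000

private lemma cs_sqrt (n : ℕ) (u v : ℕ → ℝ) :
    |∑ i ∈ Finset.range n, u i * v i| ≤
      Real.sqrt (∑ i ∈ Finset.range n, u i ^ 2) *
        Real.sqrt (∑ i ∈ Finset.range n, v i ^ 2) := by
  rw [← Real.sqrt_sq_eq_abs, ← Real.sqrt_mul (Finset.sum_nonneg fun i _ => sq_nonneg _)]
  exact Real.sqrt_le_sqrt (Finset.sum_mul_sq_le_sq_mul_sq _ _ _)

private lemma key_lim (L : ℝ) (N : ℕ → ℕ) (a : ℕ → ℕ → ℝ) (b : ℕ → ℝ)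
    (hd : Filter.Tendsto (fun k => (1 / (N k : ℝ)) *
        ∑ i ∈ Finset.range (N k), (a k i - b i) ^ 2) atTop (nhds 0))
    (hs : Filter.Tendsto (fun k => (1 / (N k : ℝ)) *
        ∑ i ∈ Finset.range (N k), b i ^ 2) atTop (nhds L)) :
    Filter.Tendsto (fun k => (1 / (N k : ℝ)) *
        ∑ i ∈ Finset.range (N k), a k i ^ 2) atTop (nhds L) := by
  set d : ℕ → ℝ := fun k => (1 / (N k : ℝ)) * ∑ i ∈ Finset.range (N k), (a k i - b i) ^ 2 with hd_def
  set s : ℕ → ℝ := fun k => (1 / (N k : ℝ)) * ∑ i ∈ Finset.range (N k), b i ^ 2 with hs_def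
  set t : ℕ → ℝ := fun k => (1 / (N k : ℝ)) * ∑ i ∈ Finset.range (N k), a k i ^ 2 with ht_def
  have hdnn : ∀ k, 0 ≤ d k := fun k =>
    mul_nonneg (by positivity) (Finset.sum_nonneg fun i _ => sq_nonneg _)
  have hsnn : ∀ k, 0 ≤ s k := fun k =>
    mul_nonneg (by positivity) (Finset.sum_nonneg fun i _ => sq_nonneg _)
  have hbound : ∀ k, |t k - d k - s k| ≤ 2 * Real.sqrt (d k * s k) := by
    intro k
    have h1 : t k - d k - s k =
        (1 / (N k : ℝ)) * (2 * ∑ i ∈ Finset.range (N k), (a k i - b i) * b i) := by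
      simp only [ht_def, hd_def, hs_def]
      rw [← mul_sub, ← mul_sub, Finset.mul_sum, ← Finset.sum_sub_distrib,
        ← Finset.sum_sub_distrib]
      congr 1
      apply Finset.sum_congr rfl
      intro i _
      ring
    rw [h1, abs_mul, abs_mul]
    have h2 : |(2 : ℝ)| = 2 := by norm_num
    have h3 : |(1 / (N k : ℝ))| = 1 / (N k : ℝ) := abs_of_nonneg (by positivity)
    rw [h2, h3]
    have h4 := cs_sqrt (N k) (fun i => a k i - b i) b
    have h5 : Real.sqrt (d k * s k) = (1 / (N k : ℝ)) *
        (Real.sqrt (∑ i ∈ Finset.range (N k), (a k i - b i) ^ 2) *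
          Real.sqrt (∑ i ∈ Finset.range (N k), b i ^ 2)) := by
      simp only [hd_def, hs_def]
      rw [show (1 / (N k : ℝ)) * (∑ i ∈ Finset.range (N k), (a k i - b i) ^ 2) *
            ((1 / (N k : ℝ)) * ∑ i ∈ Finset.range (N k), b i ^ 2) =
          (1 / (N k : ℝ)) ^ 2 * ((∑ i ∈ Finset.range (N k), (a k i - b i) ^ 2) *
            ∑ i ∈ Finset.range (N k), b i ^ 2) by ring,
        Real.sqrt_mul (by positivity), Real.sqrt_sq (by positivity),
        Real.sqrt_mul (Finset.sum_nonneg fun i _ => sq_nonneg _)]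
    rw [h5]
    calc (1 / (N k : ℝ)) * (2 * |∑ i ∈ Finset.range (N k), (a k i - b i) * b i|)
        ≤ (1 / (N k : ℝ)) * (2 * (Real.sqrt (∑ i ∈ Finset.range (N k), (a k i - b i) ^ 2) *
            Real.sqrt (∑ i ∈ Finset.range (N k), b i ^ 2))) := by
          apply mul_le_mul_of_nonneg_left _ (by positivity)
          exact mul_le_mul_of_nonneg_left h4 (by norm_num)
      _ = 2 * ((1 / (N k : ℝ)) * (Real.sqrt (∑ i ∈ Finset.range (N k), (a k i - b i) ^ 2) *
            Real.sqrt (∑ i ∈ Finset.range (N k), b i ^ 2))) := by ring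
  have hsqrt : Filter.Tendsto (fun k => 2 * Real.sqrt (d k * s k)) atTop (nhds 0) := by
    have h0 : Filter.Tendsto (fun k => d k * s k) atTop (nhds 0) := by
      simpa using hd.mul hs
    have := (Real.continuous_sqrt.tendsto 0).comp h0
    simpa using this.const_mul 2
  have hc : Filter.Tendsto (fun k => t k - d k - s k) atTop (nhds 0) :=
    squeeze_zero_norm hbound hsqrt
  have : Filter.Tendsto (fun k => (t k - d k - s k) + (d k + s k)) atTop (nhds (0 + (0 + L))) :=
    hc.add (hd.add hs)
  simpa using this

/-- Consistency of plug-in second moments (Lemma 1): if the averaged squared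
discrepancy between estimated and true influence values vanishes in probability,
the plug-in second moment converges in probability to the population second moment. -/
theorem plugin_second_moment_consistency {Ω E : Type*} [MeasurableSpace Ω]
    [MeasurableSpace E] (P : Measure Ω) [IsProbabilityMeasure P]
    (W : ℕ → Ω → E) (hWmeas : ∀ i, Measurable (W i))
    (ν : Measure E) (hlaw : ∀ i, Measure.map (W i) P = ν)
    (hindep : ProbabilityTheory.iIndepFun W P)
    (φ : E → ℝ) (hφ : Measurable φ)
    (hφ2 : Integrable (fun e => φ e ^ 2) ν)
    (φhat : ℕ → E → ℝ) (hφhat : ∀ n, Measurable (φhat n))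
    (hD : TendstoInMeasure P
      (fun (n : ℕ) ω => (1 / (n : ℝ)) * ∑ i ∈ Finset.range n, (φhat n (W i ω) - φ (W i ω)) ^ 2)
      Filter.atTop (fun _ => 0)) :
    TendstoInMeasure P
      (fun (n : ℕ) ω => (1 / (n : ℝ)) * ∑ i ∈ Finset.range n, φhat n (W i ω) ^ 2)
      Filter.atTop (fun _ => ∫ e, φ e ^ 2 ∂ν) := by
  classical
  set μI : ℝ := ∫ e, φ e ^ 2 ∂ν with hμI
  -- The iid sequence of squared true influence values
  set X : ℕ → Ω → ℝ := fun i ω => φ (W i ω) ^ 2 with hX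
  have hXmeas : ∀ i, Measurable (X i) := fun i => (hφ.comp (hWmeas i)).pow_const 2
  have hsqmeas : Measurable (fun e => φ e ^ 2) := hφ.pow_const 2
  have hint : Integrable (X 0) P := by
    have : Integrable (fun e => φ e ^ 2) (Measure.map (W 0) P) := by rw [hlaw 0]; exact hφ2
    exact (integrable_map_measure hsqmeas.aestronglyMeasurable
      (hWmeas 0).aemeasurable).mp this
  have hident : ∀ i, ProbabilityTheory.IdentDistrib (X i) (X 0) P P := by
    intro i
    have hW : ProbabilityTheory.IdentDistrib (W i) (W 0) P P :=
      ⟨(hWmeas i).aemeasurable, (hWmeas 0).aemeasurable, by rw [hlaw i, hlaw 0]⟩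
    exact hW.comp hsqmeas
  have hpind : Pairwise (Function.onFun (ProbabilityTheory.IndepFun · · P) X) := by
    intro i j hij
    exact (hindep.comp (fun _ => fun e => φ e ^ 2) (fun _ => hsqmeas)).indepFun hij
  have hEX : ∫ ω, X 0 ω ∂P = μI := by
    rw [hμI, ← hlaw 0, integral_map (hWmeas 0).aemeasurable hsqmeas.aestronglyMeasurable]
  have hSLLN : ∀ᵐ ω ∂P, Filter.Tendsto
      (fun n : ℕ => (1 / (n : ℝ)) * ∑ i ∈ Finset.range n, X i ω) atTop (nhds μI) := by
    have := ProbabilityTheory.strong_law_ae X hint hpind hident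
    filter_upwards [this] with ω hω
    rw [hEX] at hω
    simpa [one_div, smul_eq_mul] using hω
  -- Convergence in measure of the true second moment averages
  have hSmeas : ∀ n : ℕ, AEStronglyMeasurable
      (fun ω => (1 / (n : ℝ)) * ∑ i ∈ Finset.range n, X i ω) P := by
    intro n
    exact ((Finset.measurable_sum _ fun i _ => hXmeas i).const_mul
      (1 / (n : ℝ))).aestronglyMeasurable
  have hS : TendstoInMeasure P
      (fun (n : ℕ) ω => (1 / (n : ℝ)) * ∑ i ∈ Finset.range n, X i ω) atTop (fun _ => μI) :=
    tendstoInMeasure_of_tendsto_ae hSmeas hSLLN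
  -- For the subsequence argument we need measurability of the target functions
  have hTmeas : ∀ n : ℕ, AEStronglyMeasurable
      (fun ω => (1 / (n : ℝ)) * ∑ i ∈ Finset.range n, φhat n (W i ω) ^ 2) P := by
    intro n
    exact ((Finset.measurable_sum _ fun i _ =>
      ((hφhat n).comp (hWmeas i)).pow_const 2).const_mul (1 / (n : ℝ))).aestronglyMeasurable
  intro ε hε
  apply Filter.tendsto_of_subseq_tendsto
  intro ns hns
  -- Along ns, D still tends to 0 in measure and S to μI in measure
  have hD' : TendstoInMeasure P
      (fun k ω => (1 / (ns k : ℝ)) *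
        ∑ i ∈ Finset.range (ns k), (φhat (ns k) (W i ω) - φ (W i ω)) ^ 2) atTop (fun _ => 0) :=
    fun δ hδ => (hD δ hδ).comp hns
  obtain ⟨ms, hms_mono, hms_ae⟩ := hD'.exists_seq_tendsto_ae
  have hS' : TendstoInMeasure P
      (fun k ω => (1 / (ns (ms k) : ℝ)) *
        ∑ i ∈ Finset.range (ns (ms k)), X i ω) atTop (fun _ => μI) :=
    fun δ hδ => ((hS δ hδ).comp hns).comp hms_mono.tendsto_atTop
  obtain ⟨ls, hls_mono, hls_ae⟩ := hS'.exists_seq_tendsto_ae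
  refine ⟨fun k => ms (ls k), ?_⟩
  -- a.e. pointwise convergence of the target along ns ∘ ms ∘ ls
  have hae : ∀ᵐ ω ∂P, Filter.Tendsto
      (fun k => (1 / (ns (ms (ls k)) : ℝ)) *
        ∑ i ∈ Finset.range (ns (ms (ls k))), φhat (ns (ms (ls k))) (W i ω) ^ 2)
      atTop (nhds μI) := by
    filter_upwards [hms_ae, hls_ae] with ω hωD hωS
    have hωD' : Filter.Tendsto
        (fun k => (1 / (ns (ms (ls k)) : ℝ)) *
          ∑ i ∈ Finset.range (ns (ms (ls k))),
            (φhat (ns (ms (ls k))) (W i ω) - φ (W i ω)) ^ 2) atTop (nhds 0) :=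
      hωD.comp hls_mono.tendsto_atTop
    exact key_lim μI (fun k => ns (ms (ls k)))
      (fun k i => φhat (ns (ms (ls k))) (W i ω)) (fun i => φ (W i ω)) hωD' hωS
  have := tendstoInMeasure_of_tendsto_ae
    (f := fun k ω => (1 / (ns (ms (ls k)) : ℝ)) *
      ∑ i ∈ Finset.range (ns (ms (ls k))), φhat (ns (ms (ls k))) (W i ω) ^ 2)
    (g := fun _ => μI) (fun k => hTmeas (ns (ms (ls k)))) hae
  exact this ε hε
end
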